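/- arXiv:2401.17119 — 2 statements merged into one kernel-verified Lean document; each statement's English description precedes it below -/
import Mathlib

section
/- If a d-dimensional shift of finite type has only finitely many subsystems, then it is an isolated point of the space S^d. -/
/-- The group `ℤ^d`. -/
abbrev ZD (d : ℕ) := Fin d → ℤ

/-- A configuration is a map `ℤ^d → ℤ`. -/
abbrev Config (d : ℕ) := ZD d → ℤ

/-- The shift map `σ^u`, defined by `σ^u(x)_v = x_{u+v}`. -/
def shiftMap {d : ℕ} (u : ZD d) (x : Config d) : Config d := fun v => x (u + v)

/-- The sup norm `‖·‖_∞` on `ℤ^d`, valued in `ℕ`. -/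
def normInf {d : ℕ} (n : ZD d) : ℕ := Finset.univ.sup fun i => (n i).natAbs

open Classical in
/-- The metric `δ` on configurations: `δ(x,y) = 2^{-min{‖n‖_∞ : x_n ≠ y_n}}`, `δ(x,x) = 0`. -/
noncomputable def deltaDist {d : ℕ} (x y : Config d) : ℝ :=
  if x = y then 0
  else (2 : ℝ) ^ (-((sInf {m : ℕ | ∃ n : ZD d, normInf n = m ∧ x n ≠ y n} : ℕ) : ℤ))

/-- The closure of a set of configurations with respect to the metric `δ`. -/
def deltaClosure {d : ℕ} (A : Set (Config d)) : Set (Config d) :=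
  {x | ∀ ε : ℝ, 0 < ε → ∃ a ∈ A, deltaDist x a < ε}

/-- A set of configurations is closed for `δ` when it contains all its limit points. -/
def IsDeltaClosed {d : ℕ} (A : Set (Config d)) : Prop := deltaClosure A ⊆ A

/-- A `d`-dimensional shift: a nonempty set of configurations over a common finite
alphabet, closed for `δ` and invariant under every shift map. -/
def IsShift {d : ℕ} (X : Set (Config d)) : Prop :=
  X.Nonempty ∧ (∃ A : Finset ℤ, ∀ x ∈ X, ∀ v : ZD d, x v ∈ A) ∧ IsDeltaClosed X ∧
    ∀ u : ZD d, ∀ x ∈ X, shiftMap u x ∈ X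

/-- The Hausdorff metric `δ_H` on the space of shifts. -/
noncomputable def deltaH {d : ℕ} (X Z : Set (Config d)) : ℝ :=
  max (⨆ x : X, ⨅ z : Z, deltaDist (x : Config d) (z : Config d))
      (⨆ z : Z, ⨅ x : X, deltaDist (x : Config d) (z : Config d))

/-- A subsystem of a shift `X`: a nonempty closed shift-invariant subset of `X`. -/
def IsSubsystem {d : ℕ} (Z X : Set (Config d)) : Prop :=
  Z.Nonempty ∧ Z ⊆ X ∧ IsDeltaClosed Z ∧ ∀ u : ZD d, ∀ z ∈ Z, shiftMap u z ∈ Z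

/-- A maximal subsystem of `X`: a proper subsystem such that any subsystem strictly
between it and `X` equals `X`. -/
def IsMaximalSubsystem {d : ℕ} (Z X : Set (Config d)) : Prop :=
  IsSubsystem Z X ∧ Z ≠ X ∧ ∀ Z', IsSubsystem Z' X → Z ⊂ Z' → Z' = X

/-- An outcast of `X`: a proper subsystem contained in no maximal subsystem of `X`. -/
def IsOutcast {d : ℕ} (Z X : Set (Config d)) : Prop :=
  IsSubsystem Z X ∧ Z ≠ X ∧ ∀ M, IsMaximalSubsystem M X → ¬ Z ⊆ M

/-- A pattern with finite support `U` (given by the values of `p` on `U`) appears in the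
configuration `x`. -/
def PatternAppears {d : ℕ} (U : Finset (ZD d)) (p : ZD d → ℤ) (x : Config d) : Prop :=
  ∃ u : ZD d, ∀ v ∈ U, x (u + v) = p v

/-- The set of configurations over the alphabet `A` avoiding every pattern in `F`. -/
def XofF {d : ℕ} (A : Finset ℤ) (F : Set (Finset (ZD d) × (ZD d → ℤ))) : Set (Config d) :=
  {x | (∀ v : ZD d, x v ∈ A) ∧ ∀ q ∈ F, ¬ PatternAppears q.1 q.2 x}

/-- A shift of finite type: defined by a finite alphabet and a finite set of forbidden
patterns. -/
def IsSFT {d : ℕ} (X : Set (Config d)) : Prop :=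
  ∃ (A : Finset ℤ) (F : Finset (Finset (ZD d) × (ZD d → ℤ))), X = XofF A (F : Set _)

/-- `X` is an isolated point of the subspace `S` (with the Hausdorff metric `δ_H`). -/
def IsolatedIn {d : ℕ} (S : Set (Set (Config d))) (X : Set (Config d)) : Prop :=
  X ∈ S ∧ ∃ ε : ℝ, 0 < ε ∧ ∀ Z ∈ S, deltaH X Z < ε → Z = X

/-- The orbit of a configuration under the shift action. -/
def orbit {d : ℕ} (x : Config d) : Set (Config d) := {y | ∃ u : ZD d, y = shiftMap u x}

/-- A shift is transitive when some point has dense orbit. -/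
def IsTransitive {d : ℕ} (X : Set (Config d)) : Prop :=
  IsShift X ∧ ∃ x ∈ X, X ⊆ deltaClosure (orbit x)

/-- A shift is minimal when its only subsystem is itself. -/
def IsMinimalShift {d : ℕ} (X : Set (Config d)) : Prop :=
  IsShift X ∧ ∀ Z, IsSubsystem Z X → Z = X

lemma deltaDist_nonneg {d : ℕ} (x y : Config d) : 0 ≤ deltaDist x y := by
  unfold deltaDist; split
  · exact le_refl 0
  · positivity

lemma deltaDist_le_one {d : ℕ} (x y : Config d) : deltaDist x y ≤ 1 := by
  unfold deltaDist; split
  · norm_num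
  · exact zpow_le_one_of_nonpos₀ one_le_two (by simp)

/-- If `δ(x,y) < 2^{-N}` then `x` and `y` agree on the box of radius `N`. -/
lemma agree_of_deltaDist_lt {d : ℕ} {x y : Config d} {N : ℕ}
    (h : deltaDist x y < (2:ℝ) ^ (-(N:ℤ))) :
    ∀ n : ZD d, normInf n ≤ N → x n = y n := by
  intro n hn
  by_cases hxy : x = y
  · rw [hxy]
  classical
  rw [deltaDist, if_neg hxy] at h
  by_contra hne
  have hmem : normInf n ∈ {m : ℕ | ∃ n : ZD d, normInf n = m ∧ x n ≠ y n} :=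
    ⟨n, rfl, hne⟩
  have h1 : sInf {m : ℕ | ∃ n : ZD d, normInf n = m ∧ x n ≠ y n} ≤ normInf n :=
    Nat.sInf_le hmem
  have h2 := (zpow_right_strictMono₀ (a := (2:ℝ)) one_lt_two).lt_iff_lt.mp h
  simp only [neg_lt_neg_iff, Int.ofNat_lt, Nat.cast_lt] at h2
  omega

lemma exists_close_of_deltaH_lt {d : ℕ} {X W : Set (Config d)} (hXne : X.Nonempty)
    {w : Config d} (hw : w ∈ W) {ε : ℝ} (h : deltaH X W < ε) :
    ∃ x ∈ X, deltaDist x w < ε := by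
  haveI : Nonempty X := hXne.to_subtype
  have h2 : (⨆ z : W, ⨅ x : X, deltaDist (x : Config d) z) < ε :=
    lt_of_le_of_lt (le_max_right _ _) h
  have hbdd : BddAbove (Set.range fun z : W => ⨅ x : X, deltaDist (x : Config d) z) := by
    refine ⟨1, ?_⟩
    rintro s ⟨z, rfl⟩
    obtain ⟨x0, hx0⟩ := hXne
    exact le_trans
      (ciInf_le ⟨0, by rintro s ⟨x, rfl⟩; exact deltaDist_nonneg _ _⟩ ⟨x0, hx0⟩)
      (deltaDist_le_one _ _)
  have h3 : (⨅ x : X, deltaDist (x : Config d) w) < ε :=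
    lt_of_le_of_lt (le_ciSup hbdd (⟨w, hw⟩ : W)) h2
  obtain ⟨x, hx⟩ := exists_lt_of_ciInf_lt h3
  exact ⟨x, x.2, hx⟩

lemma deltaH_lower {d : ℕ} {X Z : Set (Config d)} (hZne : Z.Nonempty)
    {x : Config d} (hx : x ∈ X) {ε : ℝ} (hε : ∀ a ∈ Z, ε ≤ deltaDist x a) :
    ε ≤ deltaH X Z := by
  haveI : Nonempty Z := hZne.to_subtype
  have h1 : ε ≤ ⨅ z : Z, deltaDist x (z : Config d) := le_ciInf fun z => hε z z.2
  have hbdd : BddAbove (Set.range fun y : X => ⨅ z : Z, deltaDist (y : Config d) z) := by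
    refine ⟨1, ?_⟩
    rintro s ⟨y, rfl⟩
    obtain ⟨z0, hz0⟩ := hZne
    exact le_trans
      (ciInf_le ⟨0, by rintro s ⟨z, rfl⟩; exact deltaDist_nonneg _ _⟩ ⟨z0, hz0⟩)
      (deltaDist_le_one _ _)
  exact le_trans (le_trans h1 (le_ciSup hbdd (⟨x, hx⟩ : X))) (le_max_left _ _)

/-- A `d`-dimensional shift of finite type with finitely many subsystems is
an isolated point of `S^d`. -/
theorem SFT_finitely_many_subsystems_isolated
    (d : ℕ) (hd : 1 ≤ d) (X : Set (Config d)) (hX : IsShift X) (hsft : IsSFT X)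
    (hfin : {Z : Set (Config d) | IsSubsystem Z X}.Finite) :
    IsolatedIn {Y : Set (Config d) | IsShift Y} X := by
  classical
  obtain ⟨A, F, hXF⟩ := hsft
  obtain ⟨hne, -, hClosed, hInv⟩ := id hX
  set r : ℕ := F.sup (fun q => q.1.sup normInf) with hr
  set S : Set (Set (Config d)) := {Z | IsSubsystem Z X ∧ Z ≠ X} with hS
  have hSfin : S.Finite := hfin.subset fun Z hZ => hZ.1
  have hpos : ∀ Z ∈ S, 0 < deltaH X Z := by
    rintro Z ⟨⟨hZne, hZsub, hZcl, hZinv⟩, hZneq⟩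
    obtain ⟨x, hxX, hxZ⟩ : ∃ x, x ∈ X ∧ x ∉ Z := by
      by_contra hcon; push_neg at hcon
      exact hZneq (Set.Subset.antisymm hZsub fun x hx => hcon x hx)
    have hxc : x ∉ deltaClosure Z := fun h => hxZ (hZcl h)
    simp only [deltaClosure, Set.mem_setOf_eq] at hxc
    push_neg at hxc
    obtain ⟨ε, hε, hsep⟩ := hxc
    exact lt_of_lt_of_le hε (deltaH_lower hZne hxX fun a ha => (hsep a ha))
  let M : Finset ℝ := insert 1 (hSfin.toFinset.image fun Z => deltaH X Z)
  have hMne : M.Nonempty := ⟨1, Finset.mem_insert_self _ _⟩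
  have hMpos : 0 < M.min' hMne := by
    rcases Finset.mem_insert.mp (M.min'_mem hMne) with h | h
    · rw [h]; norm_num
    · obtain ⟨Z, hZ, hZeq⟩ := Finset.mem_image.mp h
      rw [← hZeq]; exact hpos Z (hSfin.mem_toFinset.mp hZ)
  have hεpos : 0 < min ((2:ℝ) ^ (-(r:ℤ))) (M.min' hMne) :=
    lt_min (by positivity) hMpos
  refine ⟨hX, min ((2:ℝ) ^ (-(r:ℤ))) (M.min' hMne), hεpos, ?_⟩
  rintro W ⟨Wne, WA, Wcl, Winv⟩ hWd
  have hW2 : deltaH X W < (2:ℝ) ^ (-(r:ℤ)) := lt_of_lt_of_le hWd (min_le_left _ _)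
  have hWsub : W ⊆ X := by
    intro z hz
    rw [hXF]
    constructor
    · intro v
      obtain ⟨x, hxX, hxd⟩ := exists_close_of_deltaH_lt hne (Winv v z hz) hW2
      have hag := agree_of_deltaDist_lt hxd 0 (by simp [normInf])
      rw [hXF] at hxX
      have h0 : shiftMap v z 0 = z v := by simp [shiftMap]
      rw [← h0, ← hag]
      exact hxX.1 0
    · rintro q hq ⟨u, hu⟩
      obtain ⟨x, hxX, hxd⟩ := exists_close_of_deltaH_lt hne (Winv u z hz) hW2
      rw [hXF] at hxX
      refine hxX.2 q (by exact_mod_cast hq) ⟨0, fun v hv => ?_⟩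
      have hvr : normInf v ≤ r :=
        le_trans (Finset.le_sup hv) (Finset.le_sup (f := fun q => q.1.sup normInf) hq)
      have hag := agree_of_deltaDist_lt hxd v hvr
      rw [zero_add, hag]
      exact hu v hv
  by_contra hWX
  have hWS : W ∈ S := ⟨⟨Wne, hWsub, Wcl, Winv⟩, hWX⟩
  have hle : M.min' hMne ≤ deltaH X W :=
    Finset.min'_le _ _
      (Finset.mem_insert_of_mem (Finset.mem_image_of_mem _ (hSfin.mem_toFinset.mpr hWS)))
  exact absurd (lt_of_lt_of_le hWd (min_le_right _ _)) (not_lt.mpr hle)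
end

section
/- Let A ⊂ ℤ be a finite alphabet and F any set of patterns on A such that X := X_F is nonempty. If Z is a maximal subsystem of X, then there exists a pattern p ∉ F such that Z = X_{F ∪ {p}}. In particular, every maximal subsystem of a shift of finite type is of finite type, and the set of maximal subsystems of any shift is countable. -/
section Aux

variable {d : ℕ}
/-!
A closed shift-invariant set `Z` contains every configuration all of whose central square
patterns appear in `Z`. Hence a point `x ∈ X \ Z` has a central square pattern `p` that
appears nowhere in `Z`, and `Z ⊆ X_{F ∪ {p}} ⊊ X_F`; maximality of `Z` forces equality.
Every shift is `X_F` for `F` the set of patterns it avoids, and a maximal subsystem of it is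
then determined by a single finite pattern, of which there are countably many.
-/

section Shifts

variable {d : ℕ}

noncomputable def supBall (d k : ℕ) : Finset (ZD d) :=
  Finset.Icc (fun _ => -(k : ℤ)) (fun _ => (k : ℤ))

lemma mem_supBall {k : ℕ} {v : ZD d} : v ∈ supBall d k ↔ normInf v ≤ k := by
  simp only [supBall, Finset.mem_Icc, Pi.le_def, normInf, Finset.sup_le_iff, Finset.mem_univ,
    true_implies, ← forall_and]
  exact forall_congr' fun i => by omega

lemma eq_of_deltaDist_lt {x y : Config d} {k : ℕ} (h : deltaDist x y < (2 : ℝ) ^ (-(k : ℤ)))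
    {v : ZD d} (hv : v ∈ supBall d k) : x v = y v := by
  by_contra hne
  have hxy : x ≠ y := fun he => hne (by rw [he])
  rw [deltaDist, if_neg hxy] at h
  set D := {m : ℕ | ∃ n : ZD d, normInf n = m ∧ x n ≠ y n}
  have hD : sInf D ≤ k :=
    (Nat.sInf_le (⟨v, rfl, hne⟩ : normInf v ∈ D)).trans (mem_supBall.mp hv)
  refine h.not_ge (zpow_le_zpow_right₀ (by norm_num) ?_)
  omega

lemma deltaDist_le_of_eqOn {x y : Config d} {k : ℕ} (h : ∀ v ∈ supBall d k, x v = y v) :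
    deltaDist x y ≤ (2 : ℝ) ^ (-(k : ℤ)) := by
  rw [deltaDist]
  split_ifs with hxy
  · positivity
  · set D := {m : ℕ | ∃ n : ZD d, normInf n = m ∧ x n ≠ y n}
    obtain ⟨n, hn⟩ := Function.ne_iff.mp hxy
    obtain ⟨m, hm, hxym⟩ := Nat.sInf_mem (⟨normInf n, n, rfl, hn⟩ : D.Nonempty)
    have hk : k < sInf D := hm ▸ not_le.mp fun hle => hxym (h m (mem_supBall.mpr hle))
    refine zpow_le_zpow_right₀ (by norm_num) ?_
    omega

lemma mem_deltaClosure_iff {S : Set (Config d)} {x : Config d} :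
    x ∈ deltaClosure S ↔ ∀ k : ℕ, ∃ z ∈ S, ∀ v ∈ supBall d k, x v = z v := by
  constructor
  · intro hx k
    obtain ⟨z, hz, hxz⟩ := hx _ (zpow_pos (by norm_num : (0 : ℝ) < 2) (-(k : ℤ)))
    exact ⟨z, hz, fun v hv => eq_of_deltaDist_lt hxz hv⟩
  · intro h ε hε
    obtain ⟨k, hk⟩ := exists_pow_lt_of_lt_one hε (by norm_num : (1 / 2 : ℝ) < 1)
    obtain ⟨z, hz, hxz⟩ := h k
    refine ⟨z, hz, (deltaDist_le_of_eqOn hxz).trans_lt ?_⟩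
    rwa [zpow_neg, zpow_natCast, ← inv_pow, ← one_div]

lemma patternAppears_self (U : Finset (ZD d)) (x : Config d) : PatternAppears U x x :=
  ⟨0, fun v _ => by rw [zero_add]⟩

lemma mem_of_forall_patternAppears_supBall {Z : Set (Config d)} (hZ : IsDeltaClosed Z)
    (hinv : ∀ u : ZD d, ∀ z ∈ Z, shiftMap u z ∈ Z) {x : Config d}
    (h : ∀ k : ℕ, ∃ z ∈ Z, PatternAppears (supBall d k) x z) : x ∈ Z := by
  refine hZ (mem_deltaClosure_iff.mpr fun k => ?_)
  obtain ⟨z, hz, u, hu⟩ := h k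
  exact ⟨shiftMap u z, hinv u z hz, fun v hv => (hu v hv).symm⟩

lemma exists_supBall_not_patternAppears {Z : Set (Config d)} (hZ : IsDeltaClosed Z)
    (hinv : ∀ u : ZD d, ∀ z ∈ Z, shiftMap u z ∈ Z) {x : Config d} (hx : x ∉ Z) :
    ∃ k : ℕ, ∀ z ∈ Z, ¬ PatternAppears (supBall d k) x z := by
  by_contra! h
  exact hx (mem_of_forall_patternAppears_supBall hZ hinv h)

variable {A : Finset ℤ} {F : Set (Finset (ZD d) × (ZD d → ℤ))}

lemma isDeltaClosed_XofF : IsDeltaClosed (XofF A F) := by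
  intro x hx
  rw [mem_deltaClosure_iff] at hx
  constructor
  · intro v
    obtain ⟨a, ha, hxa⟩ := hx (normInf v)
    rw [hxa v (mem_supBall.mpr le_rfl)]
    exact ha.1 v
  · rintro ⟨U, p⟩ hq ⟨u, hu⟩
    obtain ⟨a, ha, hxa⟩ := hx (U.sup fun v => normInf (u + v))
    refine ha.2 (U, p) hq ⟨u, fun v hv => ?_⟩
    rw [← hxa (u + v) (mem_supBall.mpr (Finset.le_sup (f := fun v => normInf (u + v)) hv))]
    exact hu v hv

lemma shiftMap_mem_XofF (u : ZD d) {x : Config d} (hx : x ∈ XofF A F) :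
    shiftMap u x ∈ XofF A F := by
  refine ⟨fun v => hx.1 (u + v), fun q hq ⟨w, hw⟩ => hx.2 q hq ⟨u + w, fun v hv => ?_⟩⟩
  rw [add_assoc]
  exact hw v hv

lemma XofF_insert (p : Finset (ZD d) × (ZD d → ℤ)) :
    XofF A (insert p F) = XofF A F ∩ {x | ¬ PatternAppears p.1 p.2 x} := by
  ext x
  simp only [XofF, Set.mem_insert_iff, forall_eq_or_imp, Set.mem_inter_iff, Set.mem_ofPred_eq]
  tauto

lemma exists_pattern_separating {Z : Set (Config d)} (hZ : IsDeltaClosed Z)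
    (hinv : ∀ u : ZD d, ∀ z ∈ Z, shiftMap u z ∈ Z) (hZX : Z ⊆ XofF A F) {x : Config d}
    (hx : x ∈ XofF A F) (hxZ : x ∉ Z) :
    ∃ p, p ∉ F ∧ Z ⊆ XofF A (insert p F) ∧ x ∉ XofF A (insert p F) := by
  obtain ⟨k, hk⟩ := exists_supBall_not_patternAppears hZ hinv hxZ
  have hxp : x ∉ XofF A (insert (supBall d k, x) F) := by
    rw [XofF_insert]
    exact fun h => h.2 (patternAppears_self _ x)
  refine ⟨(supBall d k, x), fun hF => hx.2 _ hF (patternAppears_self _ x), ?_, hxp⟩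
  intro z hz
  rw [XofF_insert]
  exact ⟨hZX hz, hk z hz⟩

theorem IsMaximalSubsystem.exists_eq_XofF_insert {Z : Set (Config d)}
    (hZ : IsMaximalSubsystem Z (XofF A F)) :
    ∃ p, p ∉ F ∧ Z = XofF A (insert p F) := by
  obtain ⟨⟨hZne, hZX, hZcl, hinv⟩, hZneX, hmax⟩ := hZ
  obtain ⟨x, hx, hxZ⟩ := Set.exists_of_ssubset (hZX.ssubset_of_ne hZneX)
  obtain ⟨p, hpF, hZp, hxp⟩ := exists_pattern_separating hZcl hinv hZX hx hxZ
  refine ⟨p, hpF, hZp.antisymm (not_not.mp fun hne => hxp ?_)⟩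
  have hpX : XofF A (insert p F) ⊆ XofF A F := by
    rw [XofF_insert]
    exact Set.inter_subset_left
  have hsub : IsSubsystem (XofF A (insert p F)) (XofF A F) :=
    ⟨hZne.mono hZp, hpX, isDeltaClosed_XofF, fun u _ => shiftMap_mem_XofF u⟩
  rw [hmax _ hsub (hZp.ssubset_of_ne fun h => hne h.symm.subset)]
  exact hx

end Shifts

theorem IsShift.eq_XofF_avoided {d : ℕ} {X : Set (Config d)} (hX : IsShift X) {A : Finset ℤ}
    (hA : ∀ x ∈ X, ∀ v : ZD d, x v ∈ A) :
    X = XofF A {q | ∀ x ∈ X, ¬ PatternAppears q.1 q.2 x} := by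
  refine Set.Subset.antisymm (fun x hx => ⟨hA x hx, fun q hq => hq x hx⟩) fun x hx => ?_
  refine mem_of_forall_patternAppears_supBall hX.2.2.1 hX.2.2.2 fun k => ?_
  by_contra! h
  exact hx.2 (supBall d k, x) h (patternAppears_self _ x)

theorem IsShift.countable_setOf_isMaximalSubsystem {d : ℕ} {X : Set (Config d)}
    (hX : IsShift X) : {Z | IsMaximalSubsystem Z X}.Countable := by
  obtain ⟨A, hA⟩ := hX.2.1
  refine (Set.countable_range fun q : Σ U : Finset (ZD d), U → ℤ =>
    X ∩ {x | ¬ ∃ u, ∀ v : q.1, x (u + v) = q.2 v}).mono fun Z hZ => ?_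
  rw [Set.mem_ofPred_eq, hX.eq_XofF_avoided hA] at hZ
  obtain ⟨p, -, rfl⟩ := hZ.exists_eq_XofF_insert
  refine ⟨⟨p.1, fun v => p.2 v⟩, ?_⟩
  rw [XofF_insert, ← hX.eq_XofF_avoided hA]
  simp only [PatternAppears, Subtype.forall]

theorem maximal_subsystem_is_obtained_by_forbidding_one_pattern_general
    (d : ℕ) :
    (∀ (A : Finset ℤ) (F : Set (Finset (ZD d) × (ZD d → ℤ))),
      (XofF A F).Nonempty →
        ∀ Z : Set (Config d), IsMaximalSubsystem Z (XofF A F) →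
          ∃ p : Finset (ZD d) × (ZD d → ℤ), p ∉ F ∧ Z = XofF A (insert p F)) ∧
    (∀ X : Set (Config d), IsShift X → IsSFT X →
      ∀ Z : Set (Config d), IsMaximalSubsystem Z X → IsSFT Z) ∧
    (∀ X : Set (Config d), IsShift X →
      {Z : Set (Config d) | IsMaximalSubsystem Z X}.Countable) := by
  refine ⟨fun A F _ Z hZ => hZ.exists_eq_XofF_insert, ?_,
    fun X hX => hX.countable_setOf_isMaximalSubsystem⟩
  rintro X - ⟨A, F, rfl⟩ Z hZ
  classical
  obtain ⟨p, -, rfl⟩ := hZ.exists_eq_XofF_insert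
  exact ⟨A, insert p F, by rw [Finset.coe_insert]⟩

/-- If `X = X_F` is nonempty and `Z` is a maximal subsystem of `X`, then
`Z = X_{F ∪ {p}}` for some pattern `p ∉ F`. In particular, every maximal subsystem of a
shift of finite type is of finite type, and every shift has countably many maximal
subsystems. -/
theorem maximal_subsystem_is_obtained_by_forbidding_one_pattern
    (d : ℕ) (hd : 1 ≤ d) :
    (∀ (A : Finset ℤ) (F : Set (Finset (ZD d) × (ZD d → ℤ))),
      (XofF A F).Nonempty →
        ∀ Z : Set (Config d), IsMaximalSubsystem Z (XofF A F) →
          ∃ p : Finset (ZD d) × (ZD d → ℤ), p ∉ F ∧ Z = XofF A (insert p F)) ∧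
    (∀ X : Set (Config d), IsShift X → IsSFT X →
      ∀ Z : Set (Config d), IsMaximalSubsystem Z X → IsSFT Z) ∧
    (∀ X : Set (Config d), IsShift X →
      {Z : Set (Config d) | IsMaximalSubsystem Z X}.Countable) :=
  maximal_subsystem_is_obtained_by_forbidding_one_pattern_general d
end Aux
end
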